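/- Let G be a simple graph with all vertex degrees at most d, let k ≥ 1, and let x, y be adjacent vertices whose k-balls are finite with |B_k(x)| ≤ |B_k(y)|. Let ∂B_k(x) be the set of vertices of B_k(x) having a neighbor outside B_k(x), and set ρ = |∂B_k(x)|/|B_k(x)|. Then Σ_z (1_{B_k(y)}(z)/√|B_k(y)| − 1_{B_k(x)}(z)/√|B_k(x)|)² ≤ 2dρ + (1/√(2ρd+1) − 1)². -/

import Mathlib

/-- The `k`-ball around `v` in a simple graph. -/
def gball {V : Type*} (G : SimpleGraph V) (k : ℕ) (v : V) : Set V :=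
  {u : V | G.Reachable v u ∧ G.dist v u ≤ k}

/-- The (inner) boundary of the `k`-ball around `v`: vertices of the ball having a
neighbor outside it. -/
def gboundary {V : Type*} (G : SimpleGraph V) (k : ℕ) (v : V) : Set V :=
  {u : V | u ∈ gball G k v ∧ ∃ w : V, G.Adj u w ∧ w ∉ gball G k v}

/-!
Write `A = B_k(x)`, `B = B_k(y)`. Splitting the sum over `A ∩ B`, `B \ A` and `A \ B` gives
`|A ∩ B| (1/√|B| - 1/√|A|)² + |B \ A|/|B| + |A \ B|/|A|`. Since `x ~ y`, every vertex of `B \ A`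
is a neighbour of a boundary vertex of `A`, so `|B \ A| ≤ d |∂A| = dρ|A|`; as `|A| ≤ |B|` also
`|A \ B| ≤ |B \ A|`, and the last two terms contribute at most `2dρ`. Finally
`|B| ≤ (1 + 2ρd)|A|` puts `√(|A|/|B|)` between `1/√(2ρd+1)` and `1`, which bounds the first term.
-/

open SimpleGraph Set

lemma gball_sdiff_subset_biUnion_neighborSet {V : Type*} (G : SimpleGraph V) (k : ℕ) {x y : V}
    (hxy : G.Adj x y) :
    gball G k y \ gball G k x ⊆ ⋃ w ∈ gboundary G k x, G.neighborSet w := by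
  rintro z ⟨⟨hyz, hdist⟩, hzx⟩
  obtain ⟨q, hq⟩ := hyz.exists_walk_length_eq_dist
  -- the last step of the walk `x ~ y ⇝ z` leaves the ball around `x`
  let p := Walk.cons hxy q
  have hadj : G.Adj p.penultimate z := p.adj_penultimate Walk.not_nil_cons
  have hmem : p.penultimate ∈ gball G k x :=
    ⟨p.dropLast.reachable, (G.dist_le p.dropLast).trans (by simp [p, hq, hdist])⟩
  exact mem_biUnion (x := p.penultimate) ⟨hmem, z, hadj, hzx⟩ hadj

lemma Set.ncard_biUnion_le_mul {ι α : Type*} {S : Set ι} (hS : S.Finite) (N : ι → Set α) {d : ℕ}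
    (hN : ∀ i ∈ S, (N i).ncard ≤ d) : (⋃ i ∈ S, N i).ncard ≤ d * S.ncard := by
  calc (⋃ i ∈ S, N i).ncard = (⋃ i ∈ hS.toFinset, N i).ncard := by simp
    _ ≤ ∑ i ∈ hS.toFinset, (N i).ncard := hS.toFinset.set_ncard_biUnion_le N
    _ ≤ hS.toFinset.card • d := Finset.sum_le_card_nsmul _ _ _ (by simpa using hN)
    _ = d * S.ncard := by rw [smul_eq_mul, mul_comm, ncard_eq_toFinset_card S hS]

lemma ncard_gball_sdiff_le {V : Type*} (G : SimpleGraph V) (d k : ℕ)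
    (hdeg : ∀ v : V, (G.neighborSet v).Finite ∧ (G.neighborSet v).ncard ≤ d) {x y : V}
    (hxy : G.Adj x y) (hfx : (gball G k x).Finite) :
    (gball G k y \ gball G k x).ncard ≤ d * (gboundary G k x).ncard := by
  have hfin : (gboundary G k x).Finite := hfx.subset fun _ h => h.1
  calc (gball G k y \ gball G k x).ncard
      ≤ (⋃ w ∈ gboundary G k x, G.neighborSet w).ncard :=
        ncard_le_ncard (gball_sdiff_subset_biUnion_neighborSet G k hxy)
          (hfin.biUnion fun v _ => (hdeg v).1)
    _ ≤ d * (gboundary G k x).ncard := ncard_biUnion_le_mul hfin _ fun v _ => (hdeg v).2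

lemma tsum_indicator_const {α M : Type*} [AddCommGroup M] [TopologicalSpace M]
    [IsTopologicalAddGroup M] [T2Space M] (S : Set α) (c : M) :
    ∑' z, S.indicator (fun _ => c) z = S.ncard • c := by
  rw [← tsum_subtype, tsum_const, Nat.card_coe_set_eq]

lemma tsum_sq_indicator_div_sub {α : Type*} {A B : Set α} (hA : A.Finite) (hB : B.Finite)
    (s t : ℝ) :
    ∑' z, (B.indicator (fun _ => (1 : ℝ)) z / s - A.indicator (fun _ => 1) z / t) ^ 2 =
      (A ∩ B).ncard * (1 / s - 1 / t) ^ 2 + (B \ A).ncard / s ^ 2 + (A \ B).ncard / t ^ 2 := by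
  have hsplit : ∀ z, (B.indicator (fun _ => (1 : ℝ)) z / s - A.indicator (fun _ => 1) z / t) ^ 2 =
      (A ∩ B).indicator (fun _ => (1 / s - 1 / t) ^ 2) z +
        (B \ A).indicator (fun _ => 1 / s ^ 2) z + (A \ B).indicator (fun _ => 1 / t ^ 2) z := by
    intro z
    by_cases hzA : z ∈ A <;> by_cases hzB : z ∈ B <;> simp [indicator, hzA, hzB]
  have hsum {S : Set α} (hS : S.Finite) (c : ℝ) : Summable (S.indicator fun _ => c) :=
    summable_of_hasFiniteSupport (hS.subset support_indicator_subset)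
  simp only [hsplit]
  rw [Summable.tsum_add (hsum (hA.inter_of_left B) _ |>.add (hsum hB.sdiff _)) (hsum hA.sdiff _),
    Summable.tsum_add (hsum (hA.inter_of_left B) _) (hsum hB.sdiff _)]
  simp only [tsum_indicator_const, nsmul_eq_mul]
  ring

lemma div_add_div_le_two_mul {a b p q D : ℝ} (ha : 0 < a) (hab : a ≤ b) (hp : 0 ≤ p)
    (hqp : q ≤ p) (hpD : p ≤ D * a) : p / b + q / a ≤ 2 * D := by
  have hpa : p / a ≤ D := (div_le_iff₀ ha).2 hpD
  have hpb : p / b ≤ p / a := div_le_div_of_nonneg_left hp ha hab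
  have hqa : q / a ≤ p / a := div_le_div_of_nonneg_right hqp ha.le
  linarith

lemma mul_sq_one_div_sqrt_sub_le {a b c : ℝ} (ha : 0 < a) (hab : a ≤ b)
    (hb : b ≤ a * (c + 1)) : a * (1 / √b - 1 / √a) ^ 2 ≤ (1 / √(c + 1) - 1) ^ 2 := by
  have hb0 : 0 < b := ha.trans_le hab
  have hc : 0 < c + 1 := pos_of_mul_pos_right (hb0.trans_le hb) ha.le
  have hr : a * (1 / √b - 1 / √a) ^ 2 = (√a / √b - 1) ^ 2 := by
    have : √a * (1 / √b - 1 / √a) = √a / √b - 1 := by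
      field_simp [(Real.sqrt_pos.2 ha).ne']
    rw [← this, mul_pow, Real.sq_sqrt ha.le]
  have hr1 : √a / √b ≤ 1 := div_le_one_of_le₀ (Real.sqrt_le_sqrt hab) (Real.sqrt_nonneg b)
  have hcr : 1 / √(c + 1) ≤ √a / √b := by
    rw [div_le_div_iff₀ (Real.sqrt_pos.2 hc) (Real.sqrt_pos.2 hb0), one_mul, ← Real.sqrt_mul ha.le]
    exact Real.sqrt_le_sqrt hb
  rw [hr]
  nlinarith

theorem ball_indicator_l2_estimate_general
    {V : Type*} (G : SimpleGraph V) (d k : ℕ)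
    (hdeg : ∀ v : V, (G.neighborSet v).Finite ∧ (G.neighborSet v).ncard ≤ d)
    (x y : V) (hxy : G.Adj x y)
    (hfx : (gball G k x).Finite) (hfy : (gball G k y).Finite)
    (hcard : (gball G k x).ncard ≤ (gball G k y).ncard)
    (ρ : ℝ) (hρ : ρ = ((gboundary G k x).ncard : ℝ) / ((gball G k x).ncard : ℝ)) :
    ∑' z : V,
      ((gball G k y).indicator (fun _ => (1 : ℝ)) z / Real.sqrt ((gball G k y).ncard) -
       (gball G k x).indicator (fun _ => (1 : ℝ)) z / Real.sqrt ((gball G k x).ncard)) ^ 2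
    ≤ 2 * d * ρ + (1 / Real.sqrt (2 * ρ * d + 1) - 1) ^ 2 := by
  set A := gball G k x
  set B := gball G k y
  have ha : (0 : ℝ) < A.ncard := by
    exact_mod_cast (ncard_pos hfx).2 ⟨x, Reachable.refl x, by simp⟩
  have hρ0 : 0 ≤ ρ := hρ ▸ by positivity
  have hBA : ((B \ A).ncard : ℝ) ≤ d * ρ * A.ncard := by
    rw [hρ, mul_assoc, div_mul_cancel₀ _ ha.ne']
    exact_mod_cast ncard_gball_sdiff_le G d k hdeg hxy hfx
  have hAB : ((A \ B).ncard : ℝ) ≤ (B \ A).ncard := by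
    exact_mod_cast (ncard_le_ncard_iff_ncard_sdiff_le_ncard_sdiff hfx hfy).1 hcard
  have hb : (B.ncard : ℝ) ≤ A.ncard * (2 * ρ * d + 1) := by
    have : (B.ncard : ℝ) ≤ (B \ A).ncard + A.ncard := by
      exact_mod_cast ncard_le_ncard_sdiff_add_ncard B A hfx
    nlinarith
  have hinter : ((A ∩ B).ncard : ℝ) ≤ A.ncard := by
    exact_mod_cast ncard_inter_le_ncard_left A B hfx
  have hab : (A.ncard : ℝ) ≤ B.ncard := by exact_mod_cast hcard
  rw [tsum_sq_indicator_div_sub hfx hfy, Real.sq_sqrt (by positivity), Real.sq_sqrt (by positivity)]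
  calc _ ≤ A.ncard * (1 / √B.ncard - 1 / √A.ncard) ^ 2 +
        ((B \ A).ncard / B.ncard + (A \ B).ncard / A.ncard) := by
        rw [← add_assoc]; gcongr
    _ ≤ (1 / √(2 * ρ * d + 1) - 1) ^ 2 + 2 * (d * ρ) :=
        add_le_add (mul_sq_one_div_sqrt_sub_le ha hab hb)
          (div_add_div_le_two_mul ha hab (by positivity) hAB (by linarith))
    _ = _ := by ring

/-- the normalized indicator functions of the `k`-balls around adjacent
vertices `x, y` satisfy the stated `ℓ²`-estimate in terms of the boundary ratio `ρ`. -/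
theorem ball_indicator_l2_estimate
    {V : Type*} (G : SimpleGraph V) (d k : ℕ)
    (hdeg : ∀ v : V, (G.neighborSet v).Finite ∧ (G.neighborSet v).ncard ≤ d)
    (hk : 1 ≤ k) (x y : V) (hxy : G.Adj x y)
    (hfx : (gball G k x).Finite) (hfy : (gball G k y).Finite)
    (hcard : (gball G k x).ncard ≤ (gball G k y).ncard)
    (ρ : ℝ) (hρ : ρ = ((gboundary G k x).ncard : ℝ) / ((gball G k x).ncard : ℝ)) :
    ∑' z : V,
      ((gball G k y).indicator (fun _ => (1 : ℝ)) z / Real.sqrt ((gball G k y).ncard) -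
       (gball G k x).indicator (fun _ => (1 : ℝ)) z / Real.sqrt ((gball G k x).ncard)) ^ 2
    ≤ 2 * d * ρ + (1 / Real.sqrt (2 * ρ * d + 1) - 1) ^ 2 :=
  ball_indicator_l2_estimate_general G d k hdeg x y hxy hfx hfy hcard ρ hρ
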